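/- arXiv:2210.00838 — 2 statements merged into one kernel-verified Lean document; each statement's English description precedes it below -/
import Mathlib

section
/- Under Assumption A, let S ⊆ ℝ^n × S^m be the solution set of the linear system: U*ᵀ(∇²_{xx}L(w^a)Δx − JG(x*)*ΔY) = 0; G(x*)ΔY + ΔY G(x*) + Y_a ΔG(x*;Δx) + ΔG(x*;Δx) Y_a = 2I; ∇h(x*)ᵀΔx = 0. If S ≠ ∅, then: (1) the Δx-component of S is unique, i.e. there is ξ* ∈ ℝ^n such that every (Δx, ΔY) ∈ S has Δx = ξ*; and (2) every (Δx, ΔY) ∈ S satisfies ΔY^{FF} = (G*^{FF})^{-1}, ΔG^{EE}(x*; ξ*) = (Y_a^{EE})^{-1}, and ΔY^{EF} = − Y_a^{EE} · ΔG^{EF}(x*; ξ*) · (G*^{FF})^{-1}. -/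
open Matrix Filter Set Topology

noncomputable section

abbrev Vec (n : ℕ) := EuclideanSpace ℝ (Fin n)
abbrev Mat (m : ℕ) := Matrix (Fin m) (Fin m) ℝ

/-- ΔG(x;d) = Σᵢ dᵢ ∂G/∂xᵢ(x), the directional derivative of `G`, entrywise. -/
def dirG {n m : ℕ} (G : Vec n → Mat m) (x d : Vec n) : Mat m :=
  Matrix.of fun i j => fderiv ℝ (fun y => G y i j) x d

/-- Trace inner product X • Y = trace (X Y). -/
def mdot {m₁ : ℕ} (X Y : Matrix (Fin m₁) (Fin m₁) ℝ) : ℝ := (X * Y).trace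

/-- Frobenius norm. -/
def frob {m₁ m₂ : ℕ} (X : Matrix (Fin m₁) (Fin m₂) ℝ) : ℝ :=
  Real.sqrt (∑ i, ∑ j, (X i j) ^ 2)

/-- Lagrangian L(x,Y,z) = f(x) − G(x)•Y + h(x)ᵀz. -/
def Lag {n m s : ℕ} (f : Vec n → ℝ) (G : Vec n → Mat m) (h : Vec n → Vec s)
    (x : Vec n) (Y : Mat m) (z : Vec s) : ℝ :=
  f x - mdot (G x) Y + ∑ j, h x j * z j

/-- ∇ₓL(x,Y,z). -/
def gradLag {n m s : ℕ} (f : Vec n → ℝ) (G : Vec n → Mat m) (h : Vec n → Vec s)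
    (x : Vec n) (Y : Mat m) (z : Vec s) : Vec n :=
  gradient (fun x' => Lag f G h x' Y z) x

/-- Hessian bilinear form dᵀ ∇²ₓₓL(x,Y,z) e. -/
def hessLag {n m s : ℕ} (f : Vec n → ℝ) (G : Vec n → Mat m) (h : Vec n → Vec s)
    (x : Vec n) (Y : Mat m) (z : Vec s) (d e : Vec n) : ℝ :=
  iteratedFDeriv ℝ 2 (fun x' => Lag f G h x' Y z) x ![d, e]

/-- KKT conditions. -/
def IsKKT {n m s : ℕ} (f : Vec n → ℝ) (G : Vec n → Mat m) (h : Vec n → Vec s)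
    (x : Vec n) (Y : Mat m) (z : Vec s) : Prop :=
  gradLag f G h x Y z = 0 ∧ mdot (G x) Y = 0 ∧ (G x).PosSemidef ∧ Y.PosSemidef ∧ h x = 0

/-- Lagrange multiplier set Λ(x). -/
def Lambda {n m s : ℕ} (f : Vec n → ℝ) (G : Vec n → Mat m) (h : Vec n → Vec s)
    (x : Vec n) : Set (Mat m × Vec s) :=
  {Yz | IsKKT f G h x Yz.1 Yz.2}

/-- Barrier KKT conditions with barrier parameter μ. -/
def IsBKKT {n m s : ℕ} (f : Vec n → ℝ) (G : Vec n → Mat m) (h : Vec n → Vec s)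
    (μ : ℝ) (x : Vec n) (Y : Mat m) (z : Vec s) : Prop :=
  gradLag f G h x Y z = 0 ∧ G x * Y = μ • (1 : Mat m) ∧ (G x).PosDef ∧ Y.PosDef ∧ h x = 0

/-- Mangasarian–Fromovitz constraint qualification. -/
def MFCQ {n m s : ℕ} (G : Vec n → Mat m) (h : Vec n → Vec s) (x : Vec n) : Prop :=
  Function.Surjective (fderiv ℝ h x) ∧
    ∃ d : Vec n, (G x + dirG G x d).PosDef ∧ fderiv ℝ h x d = 0

/-- Eigen-decomposition data at x*: P* = [E*,F*] orthogonal, G(x*) = F* G^FF F*ᵀ with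
G^FF diagonal positive definite. -/
structure StarDecomp {n m : ℕ} (G : Vec n → Mat m) (xstar : Vec n) (r : ℕ)
    (E : Matrix (Fin m) (Fin (m - r)) ℝ) (F : Matrix (Fin m) (Fin r) ℝ)
    (GFF : Matrix (Fin r) (Fin r) ℝ) : Prop where
  EtE : Eᵀ * E = 1
  FtF : Fᵀ * F = 1
  EtF : Eᵀ * F = 0
  resolution : E * Eᵀ + F * Fᵀ = 1
  diag : ∀ i j, i ≠ j → GFF i j = 0
  posdef : GFF.PosDef
  decomp : G xstar = F * GFF * Fᵀ

/-- Ω(x*,Y) with entries 2 Y • (Gᵢ(x*) G(x*)† Gⱼ(x*)), where G(x*)† = F* (G^FF)⁻¹ F*ᵀ. -/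
def OmegaMat {n m r : ℕ} (G : Vec n → Mat m) (xstar : Vec n)
    (F : Matrix (Fin m) (Fin r) ℝ) (GFF : Matrix (Fin r) (Fin r) ℝ)
    (Y : Mat m) : Matrix (Fin n) (Fin n) ℝ :=
  Matrix.of fun i j =>
    2 * mdot Y (dirG G xstar (EuclideanSpace.single i 1) * (F * GFF⁻¹ * Fᵀ) *
      dirG G xstar (EuclideanSpace.single j 1))

/-- The sigma-term quadratic form dᵀ Ω(x*,Y) d = 2 Y • (ΔG G† ΔG). -/
def sigmaQ {n m r : ℕ} (G : Vec n → Mat m) (xstar : Vec n)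
    (F : Matrix (Fin m) (Fin r) ℝ) (GFF : Matrix (Fin r) (Fin r) ℝ)
    (Y : Mat m) (d : Vec n) : ℝ :=
  2 * mdot Y (dirG G xstar d * (F * GFF⁻¹ * Fᵀ) * dirG G xstar d)

/-- Critical cone C(x*). -/
def critCone {n m s r : ℕ} (f : Vec n → ℝ) (G : Vec n → Mat m) (h : Vec n → Vec s)
    (xstar : Vec n) (E : Matrix (Fin m) (Fin (m - r)) ℝ) : Set (Vec n) :=
  {d | (∑ i, gradient f xstar i * d i) = 0 ∧ fderiv ℝ h xstar d = 0 ∧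
    (Eᵀ * dirG G xstar d * E).PosSemidef}

/-- Assumption A: strict complementarity, SSOSC, MFCQ at the KKT point x*. -/
structure AssumptionA {n m s r : ℕ} (f : Vec n → ℝ) (G : Vec n → Mat m)
    (h : Vec n → Vec s) (xstar : Vec n)
    (E : Matrix (Fin m) (Fin (m - r)) ℝ) (F : Matrix (Fin m) (Fin r) ℝ)
    (GFF : Matrix (Fin r) (Fin r) ℝ) : Prop where
  strict_comp : ∃ Y z, IsKKT f G h xstar Y z ∧ (G xstar + Y).PosDef
  ssosc : ∀ Y z, IsKKT f G h xstar Y z → ∀ d ∈ critCone f G h xstar E, d ≠ 0 →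
    0 < hessLag f G h xstar Y z d d + sigmaQ G xstar F GFF Y d
  mfcq : MFCQ G h xstar

/-- Analytic center of Λ(x*): minimizer of −log det Y^EE, equivalently maximizer of det Y^EE. -/
def IsAnalyticCenter {n m s r : ℕ} (f : Vec n → ℝ) (G : Vec n → Mat m)
    (h : Vec n → Vec s) (xstar : Vec n) (E : Matrix (Fin m) (Fin (m - r)) ℝ)
    (Ya : Mat m) (za : Vec s) : Prop :=
  (Ya, za) ∈ Lambda f G h xstar ∧
    ∀ Yz ∈ Lambda f G h xstar, (Eᵀ * Yz.1 * E).det ≤ (Eᵀ * Ya * E).det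

/-- U* whose columns form an orthonormal basis of {d : ΔG^EE(x*;d)=0, ∇h(x*)ᵀd=0}. -/
def IsBasisU {n m s r p : ℕ} (G : Vec n → Mat m) (h : Vec n → Vec s) (xstar : Vec n)
    (E : Matrix (Fin m) (Fin (m - r)) ℝ) (U : Fin p → Vec n) : Prop :=
  (∀ c, Eᵀ * dirG G xstar (U c) * E = 0 ∧ fderiv ℝ h xstar (U c) = 0) ∧
  (∀ c c', (inner ℝ (U c) (U c') : ℝ) = if c = c' then 1 else 0) ∧
  (∀ d : Vec n, Eᵀ * dirG G xstar d * E = 0 → fderiv ℝ h xstar d = 0 →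
    d ∈ Submodule.span ℝ (Set.range U))

/-- Solution set of the tangential linear system at w^a = (x*, Ya, za). -/
def TangSol {n m s p : ℕ} (f : Vec n → ℝ) (G : Vec n → Mat m) (h : Vec n → Vec s)
    (xstar : Vec n) (Ya : Mat m) (za : Vec s) (U : Fin p → Vec n) :
    Set (Vec n × Mat m) :=
  {q | (∀ c, hessLag f G h xstar Ya za q.1 (U c) - mdot (dirG G xstar (U c)) q.2 = 0) ∧
    G xstar * q.2 + q.2 * G xstar + Ya * dirG G xstar q.1 + dirG G xstar q.1 * Ya
      = (2 : ℝ) • (1 : Mat m) ∧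
    fderiv ℝ h xstar q.1 = 0}

/-- P_ρ(μ) = {x : ‖x* + μξ* − x‖ < ρμ‖ξ*‖}. -/
def Pball {n : ℕ} (xstar ξ : Vec n) (ρ μ : ℝ) : Set (Vec n) :=
  {x | ‖xstar + μ • ξ - x‖ < ρ * μ * ‖ξ‖}

/-- Strict local minimum of φ on the set S at v. -/
def StrictLocalMinOn {α : Type*} [TopologicalSpace α] (φ : α → ℝ) (S : Set α) (v : α) : Prop :=
  ∃ N ∈ nhds v, ∀ v' ∈ N ∩ S, v' ≠ v → φ v' > φ v

end

/-!
The analytic center `Y_a` is complementary to `G(x*)`, so in the frame `[E*, F*]` it is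
`E* Y_a^{EE} E*ᵀ`, and `Y_a^{EE}` is positive definite because strict complementarity makes
`det Y^{EE}` positive somewhere on `Λ(x*)`. Compressed to the four blocks, the linearized
complementarity equation becomes Lyapunov equations `A X + X A = C` with `A` positive definite,
whose solutions are unique; this gives the block identities. The difference `(d, D)` of two
solutions solves the homogeneous system: its `EE` block forces `ΔG^{EE}(x*;d) = 0`, so `d` lies
in the span of `U*` and in the critical cone, and the off-diagonal blocks give
`dᵀ∇²L d = ΔG(x*;d)•D = -dᵀΩ(x*,Y_a)d`. SSOSC then forces `d = 0`.
-/

namespace Matrix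

section PosDef

open scoped ComplexOrder MatrixOrder

variable {𝕜 n : Type*} [RCLike 𝕜] [Fintype n]

lemma PosSemidef.exists_eq_conjTranspose_mul_self {P : Matrix n n 𝕜} (hP : P.PosSemidef) :
    ∃ B : Matrix n n 𝕜, P = Bᴴ * B := by
  classical
  exact CStarAlgebra.nonneg_iff_eq_star_mul_self.mp hP.nonneg

lemma PosSemidef.mul_eq_zero_of_trace_mul_eq_zero {P Q : Matrix n n 𝕜} (hP : P.PosSemidef)
    (hQ : Q.PosSemidef) (h : (P * Q).trace = 0) : P * Q = 0 := by
  obtain ⟨A, rfl⟩ := hP.exists_eq_conjTranspose_mul_self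
  obtain ⟨B, rfl⟩ := hQ.exists_eq_conjTranspose_mul_self
  have hBA : B * Aᴴ = 0 := by
    rw [← trace_mul_conjTranspose_self_eq_zero_iff, ← h, conjTranspose_mul,
      conjTranspose_conjTranspose, Matrix.mul_assoc, trace_mul_comm, Matrix.mul_assoc,
      Matrix.mul_assoc, Matrix.mul_assoc]
  rw [Matrix.mul_assoc, ← Matrix.mul_assoc A, ← conjTranspose_conjTranspose (A * Bᴴ),
    conjTranspose_mul, conjTranspose_conjTranspose, hBA]
  simp

variable [DecidableEq n]

lemma PosDef.eq_zero_of_mul_add_mul_eq_zero {A C X : Matrix n n 𝕜} (hA : A.PosDef)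
    (hC : C.PosSemidef) (h : A * X + X * C = 0) : X = 0 := by
  have hP : (Xᴴ * A * X).PosSemidef := hA.posSemidef.conjTranspose_mul_mul_same X
  have hQ : (X * C * Xᴴ).PosSemidef := hC.mul_mul_conjTranspose_same X
  have hsum : (Xᴴ * A * X).trace + (X * C * Xᴴ).trace = 0 := by
    rw [trace_mul_cycle X C, ← trace_add, Matrix.mul_assoc, Matrix.mul_assoc,
      ← Matrix.mul_add, h, Matrix.mul_zero, trace_zero]
  have hPz : Xᴴ * A * X = 0 :=
    hP.trace_eq_zero_iff.mp ((add_eq_zero_iff_of_nonneg hP.trace_nonneg hQ.trace_nonneg).mp hsum).1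
  obtain ⟨B, hB⟩ := hA.posSemidef.exists_eq_conjTranspose_mul_self
  have hBX : B * X = 0 := by
    rw [← conjTranspose_mul_self_eq_zero, conjTranspose_mul]
    simpa only [hB, Matrix.mul_assoc] using hPz
  have hAX : A * X = 0 := by rw [hB, Matrix.mul_assoc, hBX, Matrix.mul_zero]
  rw [← nonsing_inv_mul_cancel_left A X ((isUnit_iff_isUnit_det A).mp hA.isUnit), hAX,
    Matrix.mul_zero]

lemma PosDef.eq_inv_of_mul_add_mul_eq_two_smul {A X : Matrix n n 𝕜} (hA : A.PosDef)
    (h : A * X + X * A = (2 : 𝕜) • 1) : X = A⁻¹ := by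
  have hdet := (isUnit_iff_isUnit_det A).mp hA.isUnit
  refine sub_eq_zero.mp (hA.eq_zero_of_mul_add_mul_eq_zero hA.posSemidef ?_)
  rw [Matrix.mul_sub, Matrix.sub_mul, mul_nonsing_inv _ hdet, nonsing_inv_mul _ hdet,
    sub_add_sub_comm, h, two_smul, sub_self]

end PosDef

variable {R l n : Type*} [CommRing R] [Fintype n] [DecidableEq n]

lemma eq_neg_mul_nonsing_inv_of_mul_add_eq_zero {A : Matrix n n R} (hA : IsUnit A.det)
    {X Y : Matrix l n R} (h : X * A + Y = 0) : X = -(Y * A⁻¹) := by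
  rw [← mul_nonsing_inv_cancel_right A X hA, eq_neg_of_add_eq_zero_left h, Matrix.neg_mul]

lemma eq_neg_nonsing_inv_mul_of_mul_add_eq_zero {A : Matrix n n R} (hA : IsUnit A.det)
    {X Y : Matrix n l R} (h : A * X + Y = 0) : X = -(A⁻¹ * Y) := by
  rw [← nonsing_inv_mul_cancel_left A X hA, eq_neg_of_add_eq_zero_left h, Matrix.mul_neg]

end Matrix

structure IsOrthonormalPair {R m e r : Type*} [CommRing R] [Fintype m] [Fintype e] [Fintype r]
    [DecidableEq m] [DecidableEq e] [DecidableEq r] (E : Matrix m e R) (F : Matrix m r R) :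
    Prop where
  EtE : Eᵀ * E = 1
  FtF : Fᵀ * F = 1
  EtF : Eᵀ * F = 0
  resolution : E * Eᵀ + F * Fᵀ = 1

namespace IsOrthonormalPair

variable {R m e r : Type*} [CommRing R] [Fintype m] [Fintype e] [Fintype r]
  [DecidableEq m] [DecidableEq e] [DecidableEq r] {E : Matrix m e R} {F : Matrix m r R}

lemma FtE (hP : IsOrthonormalPair E F) : Fᵀ * E = 0 := by
  rw [← transpose_transpose E, ← transpose_mul, hP.EtF, transpose_zero]

lemma EtE_mul (hP : IsOrthonormalPair E F) {k : Type*} (X : Matrix e k R) :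
    Eᵀ * (E * X) = X := by
  rw [← Matrix.mul_assoc, hP.EtE, Matrix.one_mul]

lemma FtF_mul (hP : IsOrthonormalPair E F) {k : Type*} (X : Matrix r k R) :
    Fᵀ * (F * X) = X := by
  rw [← Matrix.mul_assoc, hP.FtF, Matrix.one_mul]

lemma EtF_mul (hP : IsOrthonormalPair E F) {k : Type*} (X : Matrix r k R) :
    Eᵀ * (F * X) = 0 := by
  rw [← Matrix.mul_assoc, hP.EtF, Matrix.zero_mul]

lemma FtE_mul (hP : IsOrthonormalPair E F) {k : Type*} (X : Matrix e k R) :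
    Fᵀ * (E * X) = 0 := by
  rw [← Matrix.mul_assoc, hP.FtE, Matrix.zero_mul]

lemma eq_conj_fst_of_snd_mul_eq_zero (hP : IsOrthonormalPair E F) {M : Matrix m m R}
    (h₁ : Fᵀ * M = 0) (h₂ : M * F = 0) : M = E * (Eᵀ * M * E) * Eᵀ := by
  calc M = (E * Eᵀ + F * Fᵀ) * M * (E * Eᵀ + F * Fᵀ) := by rw [hP.resolution]; simp
    _ = E * (Eᵀ * M * E) * Eᵀ := by
      simp only [Matrix.add_mul, Matrix.mul_add, Matrix.mul_assoc, h₁, ← Matrix.mul_assoc M F,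
        h₂]
      simp

lemma trace_mul_eq_sum_blocks (hP : IsOrthonormalPair E F) (M N : Matrix m m R) :
    (M * N).trace = (Eᵀ * M * E * (Eᵀ * N * E)).trace + (Eᵀ * M * F * (Fᵀ * N * E)).trace
      + (Fᵀ * M * E * (Eᵀ * N * F)).trace + (Fᵀ * M * F * (Fᵀ * N * F)).trace := by
  have hMN : M * N = M * (E * Eᵀ + F * Fᵀ) * N * (E * Eᵀ + F * Fᵀ) := by
    rw [hP.resolution]; simp
  rw [hMN]
  simp only [Matrix.mul_add, Matrix.add_mul, trace_add, ← Matrix.mul_assoc, trace_mul_comm _ Eᵀ,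
    trace_mul_comm _ Fᵀ]
  ring

lemma blocks_of_complementarity_eq (hP : IsOrthonormalPair E F) {A : Matrix r r R}
    {B : Matrix e e R} {D δ C : Matrix m m R}
    (h : F * A * Fᵀ * D + D * (F * A * Fᵀ) + E * B * Eᵀ * δ + δ * (E * B * Eᵀ) = C) :
    B * (Eᵀ * δ * E) + (Eᵀ * δ * E) * B = Eᵀ * C * E ∧
    A * (Fᵀ * D * F) + (Fᵀ * D * F) * A = Fᵀ * C * F ∧
    (Eᵀ * D * F) * A + B * (Eᵀ * δ * F) = Eᵀ * C * F ∧
    A * (Fᵀ * D * E) + (Fᵀ * δ * E) * B = Fᵀ * C * E := by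
  subst h
  refine ⟨?_, ?_, ?_, ?_⟩ <;>
  simp only [Matrix.mul_add, Matrix.add_mul, Matrix.mul_assoc, hP.EtE_mul, hP.EtF_mul,
    hP.FtE_mul, hP.FtF_mul, hP.EtE, hP.EtF, hP.FtE, hP.FtF, Matrix.mul_one, Matrix.mul_zero,
    add_zero, zero_add]

/-- For `G(x*) = F A Fᵀ`, `Y = E B Eᵀ` and `(D, δ) = (ΔY, ΔG(x*;d))` solving the homogeneous
linearized complementarity equation, this is `ΔG(x*;d) • ΔY + dᵀ Ω(x*,Y) d = 0`. -/
lemma trace_mul_add_two_trace_eq_zero (hP : IsOrthonormalPair E F)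
    {A : Matrix r r R} (hA : IsUnit A.det) {B : Matrix e e R} {D δ : Matrix m m R}
    (hδ : Eᵀ * δ * E = 0) (hD : Fᵀ * D * F = 0)
    (hEF : (Eᵀ * D * F) * A + B * (Eᵀ * δ * F) = 0)
    (hFE : A * (Fᵀ * D * E) + (Fᵀ * δ * E) * B = 0) :
    (δ * D).trace + 2 * (E * B * Eᵀ * (δ * (F * A⁻¹ * Fᵀ) * δ)).trace = 0 := by
  rw [hP.trace_mul_eq_sum_blocks, hδ, hD, eq_neg_mul_nonsing_inv_of_mul_add_eq_zero hA hEF,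
    eq_neg_nonsing_inv_mul_of_mul_add_eq_zero hA hFE]
  simp only [Matrix.zero_mul, Matrix.mul_zero, Matrix.mul_neg, trace_neg, trace_zero, zero_add,
    add_zero]
  have hFE_EF : (Fᵀ * δ * E * (B * (Eᵀ * δ * F) * A⁻¹)).trace
      = (B * (Eᵀ * δ * F) * A⁻¹ * (Fᵀ * δ * E)).trace := trace_mul_comm _ _
  have hEF_FE : (Eᵀ * δ * F * (A⁻¹ * (Fᵀ * δ * E * B))).trace
      = (B * (Eᵀ * δ * F) * A⁻¹ * (Fᵀ * δ * E)).trace := by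
    rw [← Matrix.mul_assoc, ← Matrix.mul_assoc, trace_mul_comm]
    simp only [Matrix.mul_assoc]
  have hσ : (E * B * Eᵀ * (δ * (F * A⁻¹ * Fᵀ) * δ)).trace
      = (B * (Eᵀ * δ * F) * A⁻¹ * (Fᵀ * δ * E)).trace := by
    rw [show E * B * Eᵀ * (δ * (F * A⁻¹ * Fᵀ) * δ)
        = E * (B * (Eᵀ * δ * F) * A⁻¹ * Fᵀ * δ) by simp only [Matrix.mul_assoc],
      trace_mul_comm]
    simp only [Matrix.mul_assoc]
  rw [hFE_EF, hEF_FE, hσ]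
  ring

end IsOrthonormalPair

section Calculus

variable {n m s : ℕ}

noncomputable def dirGLinearMap (G : Vec n → Mat m) (x : Vec n) : Vec n →ₗ[ℝ] Mat m where
  toFun := dirG G x
  map_add' d d' := by ext i j; simp [dirG]
  map_smul' c d := by ext i j; simp [dirG]

lemma dirG_sub (G : Vec n → Mat m) (x d d' : Vec n) :
    dirG G x (d - d') = dirG G x d - dirG G x d' :=
  map_sub (dirGLinearMap G x) d d'

lemma sum_gradient_mul_eq_fderiv (φ : Vec n → ℝ) (x d : Vec n) :
    ∑ i, gradient φ x i * d i = fderiv ℝ φ x d := by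
  rw [← InnerProductSpace.toDual_symm_apply (x := d), gradient, PiLp.inner_apply]
  simp [mul_comm]

lemma hessLag_eq_fderiv_fderiv (f : Vec n → ℝ) (G : Vec n → Mat m) (h : Vec n → Vec s)
    (x : Vec n) (Y : Mat m) (z : Vec s) (v w : Vec n) :
    hessLag f G h x Y z v w = fderiv ℝ (fderiv ℝ fun x' => Lag f G h x' Y z) x v w := by
  simp [hessLag, iteratedFDeriv_two_apply]

lemma hessLag_sub_left (f : Vec n → ℝ) (G : Vec n → Mat m) (h : Vec n → Vec s)
    (x : Vec n) (Y : Mat m) (z : Vec s) (v v' w : Vec n) :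
    hessLag f G h x Y z (v - v') w = hessLag f G h x Y z v w - hessLag f G h x Y z v' w := by
  simp only [hessLag_eq_fderiv_fderiv, map_sub, _root_.sub_apply]

lemma hessLag_eq_mdot_of_mem_span {p : ℕ} {f : Vec n → ℝ} {G : Vec n → Mat m}
    {h : Vec n → Vec s} {x : Vec n} {Y : Mat m} {z : Vec s} {U : Fin p → Vec n} {d : Vec n}
    {D : Mat m} (hd : d ∈ Submodule.span ℝ (range U))
    (hU : ∀ c, hessLag f G h x Y z d (U c) = mdot (dirG G x (U c)) D) :
    hessLag f G h x Y z d d = mdot (dirG G x d) D := by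
  rw [hessLag_eq_fderiv_fderiv]
  refine LinearMap.eqOn_span
    (f := (fderiv ℝ (fderiv ℝ fun x' => Lag f G h x' Y z) x d).toLinearMap)
    (g := (traceLinearMap (Fin m) ℝ ℝ).comp
      ((LinearMap.mulRight ℝ D).comp (dirGLinearMap G x))) ?_ hd
  rintro _ ⟨c, rfl⟩
  exact (hessLag_eq_fderiv_fderiv f G h x Y z d (U c)).symm.trans (hU c)

lemma fderiv_Lag_apply {f : Vec n → ℝ} {G : Vec n → Mat m} {h : Vec n → Vec s} {x : Vec n}
    (hf : DifferentiableAt ℝ f x) (hG : ∀ i j, DifferentiableAt ℝ (fun y => G y i j) x)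
    (hh : DifferentiableAt ℝ h x) (Y : Mat m) (z : Vec s) (d : Vec n) :
    fderiv ℝ (fun x' => Lag f G h x' Y z) x d
      = fderiv ℝ f x d - mdot (dirG G x d) Y + ∑ j, fderiv ℝ h x d j * z j := by
  have hGY : HasFDerivAt (fun x' => mdot (G x') Y)
      (∑ i, ∑ j, Y j i • fderiv ℝ (fun y => G y i j) x) x := by
    simp only [mdot, trace, diag, mul_apply]
    exact HasFDerivAt.fun_sum fun i _ => HasFDerivAt.fun_sum fun j _ =>
      (hG i j).hasFDerivAt.mul_const (Y j i)
  have hhz : HasFDerivAt (fun x' => ∑ j, h x' j * z j)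
      (∑ j, z j • (EuclideanSpace.proj j).comp (fderiv ℝ h x)) x :=
    HasFDerivAt.fun_sum fun j _ =>
      ((EuclideanSpace.proj (𝕜 := ℝ) j).hasFDerivAt.comp x hh.hasFDerivAt).mul_const (z j)
  unfold Lag
  rw [((hf.hasFDerivAt.fun_sub hGY).fun_add hhz).fderiv]
  simp [mdot, trace, mul_apply, dirG, mul_comm]

end Calculus

def TangKer {n m s p : ℕ} (f : Vec n → ℝ) (G : Vec n → Mat m) (h : Vec n → Vec s)
    (xstar : Vec n) (Ya : Mat m) (za : Vec s) (U : Fin p → Vec n) : Set (Vec n × Mat m) :=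
  {q | (∀ c, hessLag f G h xstar Ya za q.1 (U c) = mdot (dirG G xstar (U c)) q.2) ∧
    G xstar * q.2 + q.2 * G xstar + Ya * dirG G xstar q.1 + dirG G xstar q.1 * Ya = 0 ∧
    fderiv ℝ h xstar q.1 = 0}

section TangentialSystem

variable {n m s r p : ℕ} {f : Vec n → ℝ} {G : Vec n → Mat m} {h : Vec n → Vec s}
  {xstar : Vec n} {E : Matrix (Fin m) (Fin (m - r)) ℝ} {F : Matrix (Fin m) (Fin r) ℝ}
  {GFF : Matrix (Fin r) (Fin r) ℝ} {Ya : Mat m} {za : Vec s} {U : Fin p → Vec n}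

lemma sub_mem_tangKer {q q' : Vec n × Mat m} (hq : q ∈ TangSol f G h xstar Ya za U)
    (hq' : q' ∈ TangSol f G h xstar Ya za U) : q - q' ∈ TangKer f G h xstar Ya za U := by
  obtain ⟨hhess, hcompl, hd⟩ := hq
  obtain ⟨hhess', hcompl', hd'⟩ := hq'
  refine ⟨fun c => ?_, ?_, ?_⟩
  · have h₁ := hhess c
    have h₂ := hhess' c
    simp only [Prod.fst_sub, Prod.snd_sub, hessLag_sub_left, mdot, Matrix.mul_sub,
      trace_sub] at h₁ h₂ ⊢
    linarith
  · rw [Prod.fst_sub, Prod.snd_sub, dirG_sub, ← sub_eq_zero.mpr (hcompl.trans hcompl'.symm)]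
    simp only [Matrix.mul_sub, Matrix.sub_mul]
    abel
  · rw [Prod.fst_sub, map_sub, hd, hd', sub_self]

lemma StarDecomp.isOrthonormalPair (hdec : StarDecomp G xstar r E F GFF) :
    IsOrthonormalPair E F :=
  ⟨hdec.EtE, hdec.FtF, hdec.EtF, hdec.resolution⟩

lemma StarDecomp.eq_conj_of_isKKT (hdec : StarDecomp G xstar r E F GFF) {Y : Mat m} {z : Vec s}
    (hY : IsKKT f G h xstar Y z) : Y = E * (Eᵀ * Y * E) * Eᵀ := by
  obtain ⟨-, hcomp, hGpsd, hYpsd, -⟩ := hY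
  have hGY : G xstar * Y = 0 := hGpsd.mul_eq_zero_of_trace_mul_eq_zero hYpsd hcomp
  have hFY : Fᵀ * Y = 0 := by
    have hFG : Fᵀ * G xstar = GFF * Fᵀ := by
      simp only [hdec.decomp, Matrix.mul_assoc, hdec.isOrthonormalPair.FtF_mul]
    have hGFF : GFF * (Fᵀ * Y) = 0 := by
      rw [← Matrix.mul_assoc, ← hFG, Matrix.mul_assoc, hGY, Matrix.mul_zero]
    rw [← nonsing_inv_mul_cancel_left GFF (Fᵀ * Y)
      ((isUnit_iff_isUnit_det _).mp hdec.posdef.isUnit), hGFF, Matrix.mul_zero]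
  have hYF : Y * F = 0 := by
    rw [← transpose_transpose (Y * F), transpose_mul, (isHermitian_iff_isSymm.mp hYpsd.1).eq,
      hFY, transpose_zero]
  exact hdec.isOrthonormalPair.eq_conj_fst_of_snd_mul_eq_zero hFY hYF

lemma IsAnalyticCenter.posDef (hdec : StarDecomp G xstar r E F GFF)
    (hsc : ∃ Y z, IsKKT f G h xstar Y z ∧ (G xstar + Y).PosDef)
    (hAC : IsAnalyticCenter f G h xstar E Ya za) : (Eᵀ * Ya * E).PosDef := by
  obtain ⟨Y, z, hY, hpos⟩ := hsc
  obtain ⟨⟨-, -, -, hYa, -⟩, hmax⟩ := hAC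
  have hE : Function.Injective E.mulVec := fun v w hvw => by
    simpa [mulVec_mulVec, hdec.EtE] using congrArg (Eᵀ *ᵥ ·) hvw
  have hYE : (Eᵀ * Y * E).PosDef := by
    have hEG : Eᵀ * G xstar = 0 := by simp [hdec.decomp, ← Matrix.mul_assoc, hdec.EtF]
    simpa [conjTranspose_eq_transpose_of_trivial, Matrix.mul_add, Matrix.add_mul, hEG] using
      hpos.conjTranspose_mul_mul_same hE
  have hYaE : (Eᵀ * Ya * E).PosSemidef := by
    simpa [conjTranspose_eq_transpose_of_trivial] using hYa.conjTranspose_mul_mul_same E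
  exact hYaE.posDef_iff_det_ne_zero.mpr (hYE.det_pos.trans_le (hmax (Y, z) hY)).ne'

lemma mem_critCone_of_isKKT (hf : DifferentiableAt ℝ f xstar)
    (hG : ∀ i j, DifferentiableAt ℝ (fun y => G y i j) xstar)
    (hh : DifferentiableAt ℝ h xstar)
    {Y : Mat m} {z : Vec s} (hKKT : IsKKT f G h xstar Y z) (hY : Y = E * (Eᵀ * Y * E) * Eᵀ)
    {d : Vec n} (hδ : Eᵀ * dirG G xstar d * E = 0) (hd : fderiv ℝ h xstar d = 0) :
    d ∈ critCone f G h xstar E := by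
  refine ⟨?_, hd, hδ ▸ PosSemidef.zero⟩
  have hL : fderiv ℝ (fun x' => Lag f G h x' Y z) xstar d = 0 := by
    have hgrad : gradient (fun x' => Lag f G h x' Y z) xstar = 0 := hKKT.1
    rw [← sum_gradient_mul_eq_fderiv, hgrad]
    simp
  have hδY : mdot (dirG G xstar d) Y = 0 := by
    set B := Eᵀ * Y * E
    calc mdot (dirG G xstar d) Y = (E * (B * (Eᵀ * dirG G xstar d))).trace := by
          rw [mdot, hY, trace_mul_comm]; simp only [Matrix.mul_assoc]
      _ = (B * (Eᵀ * dirG G xstar d * E)).trace := by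
          rw [trace_mul_comm]; simp only [Matrix.mul_assoc]
      _ = 0 := by rw [hδ, Matrix.mul_zero, trace_zero]
  rw [fderiv_Lag_apply hf hG hh, hδY, hd] at hL
  rw [sum_gradient_mul_eq_fderiv]
  simpa using hL

lemma eq_zero_of_mem_tangKer (hf : DifferentiableAt ℝ f xstar)
    (hG : ∀ i j, DifferentiableAt ℝ (fun y => G y i j) xstar)
    (hh : DifferentiableAt ℝ h xstar)
    (hdec : StarDecomp G xstar r E F GFF) (hA : AssumptionA f G h xstar E F GFF)
    (hAC : IsAnalyticCenter f G h xstar E Ya za) (hU : IsBasisU G h xstar E U)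
    {q : Vec n × Mat m} (hq : q ∈ TangKer f G h xstar Ya za U) : q.1 = 0 := by
  obtain ⟨hhess, hcompl, hd⟩ := hq
  have hP := hdec.isOrthonormalPair
  have hKKT : IsKKT f G h xstar Ya za := hAC.1
  have hYa := hdec.eq_conj_of_isKKT hKKT
  have hB := hAC.posDef hdec hA.strict_comp
  rw [hdec.decomp, hYa] at hcompl
  obtain ⟨hEE, hFF, hEF, hFE⟩ := hP.blocks_of_complementarity_eq hcompl
  simp only [Matrix.mul_zero, Matrix.zero_mul] at hEE hFF hEF hFE
  have hδ := hB.eq_zero_of_mul_add_mul_eq_zero hB.posSemidef hEE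
  have hD := hdec.posdef.eq_zero_of_mul_add_mul_eq_zero hdec.posdef.posSemidef hFF
  have hcurv := hP.trace_mul_add_two_trace_eq_zero
    ((isUnit_iff_isUnit_det _).mp hdec.posdef.isUnit) hδ hD hEF hFE
  by_contra hne
  have hpos := hA.ssosc Ya za hKKT q.1 (mem_critCone_of_isKKT hf hG hh hKKT hYa hδ hd) hne
  rw [hessLag_eq_mdot_of_mem_span (hU.2.2 _ hδ hd) hhess, sigmaQ, mdot, mdot, hYa] at hpos
  linarith

lemma blocks_of_mem_tangSol (hdec : StarDecomp G xstar r E F GFF)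
    (hKKT : IsKKT f G h xstar Ya za) (hB : (Eᵀ * Ya * E).PosDef) {q : Vec n × Mat m}
    (hq : q ∈ TangSol f G h xstar Ya za U) :
    Fᵀ * q.2 * F = GFF⁻¹ ∧ Eᵀ * dirG G xstar q.1 * E = (Eᵀ * Ya * E)⁻¹ ∧
      Eᵀ * q.2 * F = -((Eᵀ * Ya * E) * (Eᵀ * dirG G xstar q.1 * F) * GFF⁻¹) := by
  have hP := hdec.isOrthonormalPair
  have hcompl := hq.2.1
  rw [hdec.decomp, hdec.eq_conj_of_isKKT hKKT] at hcompl
  obtain ⟨hEE, hFF, hEF, -⟩ := hP.blocks_of_complementarity_eq hcompl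
  simp only [Matrix.smul_mul, Matrix.mul_smul, Matrix.mul_one, hP.EtE, hP.FtF, hP.EtF,
    smul_zero] at hEE hFF hEF
  exact ⟨hdec.posdef.eq_inv_of_mul_add_mul_eq_two_smul hFF,
    hB.eq_inv_of_mul_add_mul_eq_two_smul hEE,
    eq_neg_mul_nonsing_inv_of_mul_add_eq_zero
      ((isUnit_iff_isUnit_det _).mp hdec.posdef.isUnit) hEF⟩

end TangentialSystem

theorem stmt6_general {n m s r p : ℕ}
    (f : Vec n → ℝ) (G : Vec n → Mat m) (h : Vec n → Vec s)
    (hf : ContDiff ℝ 2 f) (hG : ∀ i j, ContDiff ℝ 2 fun x => G x i j)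
    (hh : ContDiff ℝ 2 h)
    (xstar : Vec n)
    (E : Matrix (Fin m) (Fin (m - r)) ℝ) (F : Matrix (Fin m) (Fin r) ℝ)
    (GFF : Matrix (Fin r) (Fin r) ℝ)
    (hdec : StarDecomp G xstar r E F GFF)
    (hA : AssumptionA f G h xstar E F GFF)
    (Ya : Mat m) (za : Vec s)
    (hAC : IsAnalyticCenter f G h xstar E Ya za)
    (U : Fin p → Vec n) (hU : IsBasisU G h xstar E U)
    (hS : (TangSol f G h xstar Ya za U).Nonempty) :
    ∃ ξ : Vec n,
      (∀ q ∈ TangSol f G h xstar Ya za U, q.1 = ξ) ∧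
      ∀ q ∈ TangSol f G h xstar Ya za U,
        Fᵀ * q.2 * F = GFF⁻¹ ∧
        Eᵀ * dirG G xstar ξ * E = (Eᵀ * Ya * E)⁻¹ ∧
        Eᵀ * q.2 * F = -((Eᵀ * Ya * E) * (Eᵀ * dirG G xstar ξ * F) * GFF⁻¹) := by
  obtain ⟨q₀, hq₀⟩ := hS
  have hfst : ∀ q ∈ TangSol f G h xstar Ya za U, q.1 = q₀.1 := fun q hq =>
    sub_eq_zero.mp <| eq_zero_of_mem_tangKer (hf.differentiable two_ne_zero xstar)
      (fun i j => (hG i j).differentiable two_ne_zero xstar)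
      (hh.differentiable two_ne_zero xstar) hdec hA hAC hU (sub_mem_tangKer hq hq₀)
  refine ⟨q₀.1, hfst, fun q hq => ?_⟩
  rw [← hfst q hq]
  exact blocks_of_mem_tangSol hdec hAC.1 (hAC.posDef hdec hA.strict_comp) hq

/-- if the tangential linear system at w^a has a solution, its Δx-component is
unique (call it ξ*) and the block identities ΔY^FF = (G*^FF)⁻¹,
ΔG^EE(x*;ξ*) = (Ya^EE)⁻¹, ΔY^EF = −Ya^EE·ΔG^EF(x*;ξ*)·(G*^FF)⁻¹ hold. -/
theorem stmt6 {n m s r p : ℕ}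
    (f : Vec n → ℝ) (G : Vec n → Mat m) (h : Vec n → Vec s)
    (hf : ContDiff ℝ 2 f) (hG : ∀ i j, ContDiff ℝ 2 fun x => G x i j)
    (hh : ContDiff ℝ 2 h) (hGsymm : ∀ x, (G x).IsSymm)
    (xstar : Vec n)
    (E : Matrix (Fin m) (Fin (m - r)) ℝ) (F : Matrix (Fin m) (Fin r) ℝ)
    (GFF : Matrix (Fin r) (Fin r) ℝ)
    (hdec : StarDecomp G xstar r E F GFF)
    (hA : AssumptionA f G h xstar E F GFF)
    (Ya : Mat m) (za : Vec s)
    (hAC : IsAnalyticCenter f G h xstar E Ya za)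
    (U : Fin p → Vec n) (hU : IsBasisU G h xstar E U)
    (hS : (TangSol f G h xstar Ya za U).Nonempty) :
    ∃ ξ : Vec n,
      (∀ q ∈ TangSol f G h xstar Ya za U, q.1 = ξ) ∧
      ∀ q ∈ TangSol f G h xstar Ya za U,
        Fᵀ * q.2 * F = GFF⁻¹ ∧
        Eᵀ * dirG G xstar ξ * E = (Eᵀ * Ya * E)⁻¹ ∧
        Eᵀ * q.2 * F = -((Eᵀ * Ya * E) * (Eᵀ * dirG G xstar ξ * F) * GFF⁻¹) :=
  stmt6_general f G h hf hG hh xstar E F GFF hdec hA Ya za hAC U hU hS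
end

section
/- Let x* be a feasible point of the NSDP with G(x*) ∈ S^m_+ \ S^m_{++}, and suppose ∇h(x*) has full column rank and there exists d ∈ ℝ^n with G(x*) + ΔG(x*; d) ∈ S^m_{++} and ∇h(x*)ᵀd = 0 (MFCQ). Then there exist t̄ > 0 and a smooth curve x : [0, t̄] → ℝ^n such that x(0) = x*, ẋ(0) = d, and for every t ∈ (0, t̄]: h(x(t)) = 0 and G(x(t)) ∈ S^m_{++}. Consequently, for every sufficiently small α > 0 there exists t ∈ (0, t̄] with det G(x(t)) = α. -/
open Matrix Filter Set Topology

/-!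
The implicit function theorem, applied to `h` at `x*` (where `∇h(x*)` is surjective), gives a
`C¹` curve `γ` in the fibre `h = 0` with `γ 0 = x*` and `γ' 0 = d`. Writing
`G (γ t) = (1 - t) G(x*) + t N(t)` with `N(t) → G(x*) + ΔG(x*; d) ≻ 0`, and using that positive
definiteness is an open condition among symmetric matrices, `G (γ t)` is positive semidefinite plus
positive definite, hence positive definite, for small `t > 0`. Since `G(x*)` is singular,
`det G(γ t)` runs continuously from `0` to `det G(γ t̄) > 0`, so the intermediate value theorem
gives every small `α > 0`.
-/

theorem ContDiffAt.exists_tangent_curve_in_fiber {E F : Type*} [NormedAddCommGroup E]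
    [NormedSpace ℝ E] [CompleteSpace E] [NormedAddCommGroup F] [NormedSpace ℝ F]
    [FiniteDimensional ℝ F] {f : E → F} {a : E} {n : WithTop ℕ∞} (hf : ContDiffAt ℝ n f a)
    (hn : n ≠ 0) (hsurj : Function.Surjective (fderiv ℝ f a)) {d : E}
    (hd : fderiv ℝ f a d = 0) :
    ∃ γ : ℝ → E, γ 0 = a ∧ HasDerivAt γ d 0 ∧ ContDiffAt ℝ n γ 0 ∧
      ∀ᶠ t in 𝓝 0, f (γ t) = f a := by
  have hsf : HasStrictFDerivAt f (fderiv ℝ f a) a := hf.hasStrictFDerivAt hn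
  have hL : (fderiv ℝ f a).range = ⊤ := LinearMap.range_eq_top.mpr hsurj
  have hker := (fderiv ℝ f a).ker_closedComplemented_of_finiteDimensional_range
  let φ := hsf.implicitFunctionDataOfComplemented f _ hL hker
  let v : (fderiv ℝ f a).ker := ⟨d, hd⟩
  let line : ℝ → F × (fderiv ℝ f a).ker := fun t => (f a, t • v)
  refine ⟨Function.uncurry φ.implicitFunction ∘ line, ?_, ?_, ?_, ?_⟩
  · show φ.implicitFunction (f a) ((0 : ℝ) • v) = a
    rw [zero_smul]
    exact hsf.implicitFunctionOfComplemented_apply_image hL hker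
  · have := (hsf.to_implicitFunctionOfComplemented hL hker).hasFDerivAt.comp_hasDerivAt_of_eq
      (0 : ℝ) ((hasDerivAt_id (0 : ℝ)).smul_const v) (zero_smul ℝ v).symm
    rw [one_smul] at this
    exact this
  · have hline0 : line 0 = φ.prodFun φ.pt := by simp [line, φ]
    refine ContDiffAt.comp (0 : ℝ) ?_ (by fun_prop)
    rw [hline0]
    exact φ.contDiffAt_implicitFunction hf
      (by simp only [φ, HasStrictFDerivAt.implicitFunctionDataOfComplemented]; fun_prop) hn
  · have hT : Tendsto line (𝓝 0) (𝓝 (f a, 0)) := by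
      simpa [line] using (by fun_prop : Continuous line).tendsto 0
    exact hT.eventually (hsf.map_implicitFunctionOfComplemented_eq hL hker)

theorem Matrix.PosDef.eventually_posDef_of_isHermitian {ι : Type*} [Fintype ι]
    {A : Matrix ι ι ℝ} (hA : A.PosDef) : ∀ᶠ M in 𝓝 A, M.IsHermitian → M.PosDef := by
  have hS : IsCompact (Metric.sphere (0 : ι → ℝ) 1) := isCompact_sphere 0 1
  have hcont : Continuous fun p : Matrix ι ι ℝ × (ι → ℝ) => p.2 ⬝ᵥ (p.1 *ᵥ p.2) := by
    fun_prop
  have hpos : ∀ᶠ M in 𝓝 A, ∀ v ∈ Metric.sphere (0 : ι → ℝ) 1, 0 < v ⬝ᵥ (M *ᵥ v) := by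
    refine hS.eventually_forall_of_forall_eventually fun v hv => ?_
    have hv0 : v ≠ 0 := ne_zero_of_mem_unit_sphere ⟨v, hv⟩
    have : 0 < v ⬝ᵥ (A *ᵥ v) := by simpa using hA.dotProduct_mulVec_pos hv0
    exact hcont.continuousAt.eventually (lt_mem_nhds this)
  filter_upwards [hpos] with M hM hherm
  refine .of_dotProduct_mulVec_pos hherm fun x hx => ?_
  have hx' : 0 < ‖x‖ := norm_pos_iff.mpr hx
  have := hM (‖x‖⁻¹ • x) (by simp [norm_smul, hx'.ne'])
  rw [mulVec_smul, dotProduct_smul, smul_dotProduct, smul_eq_mul, smul_eq_mul] at this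
  have hinv : 0 ≤ ‖x‖⁻¹ := inv_nonneg.mpr hx'.le
  simpa using pos_of_mul_pos_right (pos_of_mul_pos_right this hinv) hinv

theorem Matrix.eventually_posDef_of_hasDerivAt {ι : Type*} [Fintype ι] {M : ℝ → Matrix ι ι ℝ}
    {B : Matrix ι ι ℝ} (hM : ∀ i j, HasDerivAt (fun t => M t i j) (B i j) 0)
    (hherm : ∀ t, (M t).IsHermitian) (h0 : (M 0).PosSemidef) (hB : (M 0 + B).PosDef) :
    ∀ᶠ t in 𝓝[>] 0, (M t).PosDef := by
  set N : ℝ → Matrix ι ι ℝ := fun t => M 0 + t⁻¹ • (M t - M 0)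
  have hN : Tendsto N (𝓝[>] 0) (𝓝 (M 0 + B)) := by
    refine tendsto_pi_nhds.2 fun i => tendsto_pi_nhds.2 fun j => ?_
    have hslope := (hasDerivAt_iff_tendsto_slope.mp (hM i j)).mono_left (nhdsGT_le_nhdsNE 0)
    simpa [N, slope_def_field, div_eq_inv_mul] using hslope.const_add (M 0 i j)
  filter_upwards [hN.eventually hB.eventually_posDef_of_isHermitian, Ioc_mem_nhdsGT one_pos]
    with t hNt ht
  have hNherm : (N t).IsHermitian :=
    (hherm 0).add (((hherm t).sub (hherm 0)).smul (IsSelfAdjoint.all _))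
  have hconv : M t = (1 - t) • M 0 + t • N t := by
    simp only [N, smul_add, smul_smul, mul_inv_cancel₀ ht.1.ne', one_smul]
    module
  rw [hconv]
  exact PosDef.posSemidef_add (h0.smul (sub_nonneg.2 ht.2)) ((hNt hNherm).smul ht.1)

theorem ContinuousOn.eventually_exists_mem_Ioc_eq {g : ℝ → ℝ} {T : ℝ} (hT : 0 ≤ T)
    (hg : ContinuousOn g (Icc 0 T)) (h0 : g 0 = 0) (hT_pos : 0 < g T) :
    ∀ᶠ α in 𝓝[>] 0, ∃ t ∈ Ioc 0 T, g t = α := by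
  filter_upwards [Ioo_mem_nhdsGT hT_pos] with α hα
  obtain ⟨t, ht, hgt⟩ := intermediate_value_Icc hT hg (h0 ▸ Ioo_subset_Icc_self hα)
  refine ⟨t, ⟨ht.1.lt_of_ne ?_, ht.2⟩, hgt⟩
  rintro rfl
  exact hα.1.ne' (hgt ▸ h0)

theorem stmt17_general {n m s : ℕ}
    (G : Vec n → Mat m) (h : Vec n → Vec s)
    (hG : ∀ i j, ContDiff ℝ 2 fun x => G x i j)
    (hh : ContDiff ℝ 2 h) (hGsymm : ∀ x, (G x).IsSymm)
    (xstar : Vec n)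
    (hfeas1 : (G xstar).PosSemidef) (hfeas2 : ¬ (G xstar).PosDef)
    (hfeash : h xstar = 0)
    (hrank : Function.Surjective (fderiv ℝ h xstar))
    (d : Vec n)
    (hd : (G xstar + dirG G xstar d).PosDef)
    (hd2 : fderiv ℝ h xstar d = 0) :
    ∃ tbar > (0:ℝ), ∃ x : ℝ → Vec n,
      ContDiffOn ℝ 1 x (Set.Icc 0 tbar) ∧
      x 0 = xstar ∧
      HasDerivWithinAt x d (Set.Icc 0 tbar) 0 ∧
      (∀ t ∈ Set.Ioc (0:ℝ) tbar, h (x t) = 0 ∧ (G (x t)).PosDef) ∧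
      ∀ᶠ α in 𝓝[>] (0:ℝ), ∃ t ∈ Set.Ioc (0:ℝ) tbar, (G (x t)).det = α := by
  obtain ⟨γ, hγ0, hγd, hγ_smooth, hγh⟩ :=
    (hh.contDiffAt.of_le one_le_two).exists_tangent_curve_in_fiber one_ne_zero hrank hd2
  obtain ⟨u, hu, hγu⟩ := hγ_smooth.contDiffOn le_rfl (by simp)
  have hGγ (i j : Fin m) : HasDerivAt (fun t => G (γ t) i j) (dirG G xstar d i j) 0 :=
    ((hG i j).differentiable two_ne_zero xstar).hasFDerivAt.comp_hasDerivAt_of_eq 0 hγd hγ0.symm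
  have hPD : ∀ᶠ t in 𝓝[>] 0, (G (γ t)).PosDef :=
    eventually_posDef_of_hasDerivAt hGγ (fun t => isHermitian_iff_isSymm.2 (hGsymm _))
      (hγ0 ▸ hfeas1) (hγ0 ▸ hd)
  have hfeasible : ∀ᶠ t in 𝓝[>] 0, (h (γ t) = 0 ∧ (G (γ t)).PosDef) ∧ t ∈ u := by
    filter_upwards [nhdsWithin_le_nhds (hγh.and hu), hPD] with t ⟨hht, htu⟩ hPDt
    exact ⟨⟨hht.trans hfeash, hPDt⟩, htu⟩
  obtain ⟨tbar, htbar, hsub⟩ := mem_nhdsGT_iff_exists_Ioc_subset.mp hfeasible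
  have hIcc : Icc 0 tbar ⊆ u := by
    rw [← Ioc_insert_left htbar.le]
    exact insert_subset (mem_of_mem_nhds hu) fun t ht => (hsub ht).2
  have hdet0 : (G xstar).det = 0 := not_not.mp (mt hfeas1.posDef_iff_det_ne_zero.mpr hfeas2)
  have hdet : ContinuousOn (fun t => (G (γ t)).det) (Icc 0 tbar) :=
    (continuous_matrix fun i j => (hG i j).continuous).matrix_det.comp_continuousOn
      (hγu.mono hIcc).continuousOn
  refine ⟨tbar, htbar, γ, hγu.mono hIcc, hγ0, hγd.hasDerivWithinAt, fun t ht => (hsub ht).1, ?_⟩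
  exact hdet.eventually_exists_mem_Ioc_eq htbar.le (by rw [hγ0, hdet0])
    (hsub ⟨htbar, le_rfl⟩).1.2.det_pos

/-- under MFCQ at a boundary feasible point x*, there is a smooth curve x(t)
emanating from x* with velocity d which is feasible and strictly matrix-positive for t > 0;
consequently det G(x(t)) attains every sufficiently small positive value α. -/
theorem stmt17 {n m s : ℕ}
    (f : Vec n → ℝ) (G : Vec n → Mat m) (h : Vec n → Vec s)
    (hf : ContDiff ℝ 2 f) (hG : ∀ i j, ContDiff ℝ 2 fun x => G x i j)
    (hh : ContDiff ℝ 2 h) (hGsymm : ∀ x, (G x).IsSymm)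
    (xstar : Vec n)
    (hfeas1 : (G xstar).PosSemidef) (hfeas2 : ¬ (G xstar).PosDef)
    (hfeash : h xstar = 0)
    (hrank : Function.Surjective (fderiv ℝ h xstar))
    (d : Vec n)
    (hd : (G xstar + dirG G xstar d).PosDef)
    (hd2 : fderiv ℝ h xstar d = 0) :
    ∃ tbar > (0:ℝ), ∃ x : ℝ → Vec n,
      ContDiffOn ℝ 1 x (Set.Icc 0 tbar) ∧
      x 0 = xstar ∧
      HasDerivWithinAt x d (Set.Icc 0 tbar) 0 ∧
      (∀ t ∈ Set.Ioc (0:ℝ) tbar, h (x t) = 0 ∧ (G (x t)).PosDef) ∧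
      ∀ᶠ α in 𝓝[>] (0:ℝ), ∃ t ∈ Set.Ioc (0:ℝ) tbar, (G (x t)).det = α :=
  stmt17_general G h hG hh hGsymm xstar hfeas1 hfeas2 hfeash hrank d hd hd2
end
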